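/- arXiv:1603.08777 — 3 statements merged into one kernel-verified Lean document; each statement's English description precedes it below -/
import Mathlib

section
/- For n ≥ 3 and s ∈ ℕ, the probability that the Erdős–Rényi random graph G(n, 1/2) contains a clique or an independent set of size t = ⌈3·log₂ n + √(2s)⌉ is at most 2^{−s}. -/
/-!
Union bound over the `C(n, t)` vertex sets of size `t`. A fixed `t`-set is a clique in at most a
`2^{-C(t,2)}` fraction of all graphs, since the graphs containing a fixed graph `H` inject into the
subsets of the edges of `Hᶜ`; by complementation the same holds for independent sets. Hence the
probability is at most `2 C(n,t) 2^{-C(t,2)} ≤ 2^{1 + t log₂ n - C(t,2)}`, and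
`t ≥ 3 log₂ n + √(2s)` forces `C(t,2) ≥ 1 + s + t log₂ n`.
-/

open Finset

namespace SimpleGraph

variable {V : Type*}

lemma isClique_iff_map_top_le {G : SimpleGraph V} {s : Set V} :
    G.IsClique s ↔ (⊤ : SimpleGraph s).map (Function.Embedding.subtype _) ≤ G := by
  rw [map_le_iff_le_comap, top_le_iff, ← induce_eq_top]

variable [Fintype V] [DecidableEq V]

lemma card_edgeFinset_add_card_edgeFinset_compl (H : SimpleGraph V) [DecidableRel H.Adj] :
    #H.edgeFinset + #Hᶜ.edgeFinset = (Fintype.card V).choose 2 := by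
  rw [← card_union_of_disjoint (disjoint_edgeFinset.2 disjoint_compl_right), ← edgeFinset_sup,
    ← card_edgeFinset_top_eq_card_choose_two]
  congr! 2
  exact sup_compl_eq_top

section

open scoped Classical

lemma card_supergraphs_mul_two_pow_le (H : SimpleGraph V) [DecidableRel H.Adj] :
    #{G : SimpleGraph V | H ≤ G} * 2 ^ #H.edgeFinset ≤ 2 ^ (Fintype.card V).choose 2 := by
  have hinj : #{G : SimpleGraph V | H ≤ G} ≤ #Hᶜ.edgeFinset.powerset := by
    refine card_le_card_of_injOn (fun G => (G \ H).edgeFinset) (fun G _ => ?_) ?_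
    · rw [mem_coe, mem_powerset, edgeFinset_subset_edgeFinset, sdiff_eq]
      exact inf_le_right
    · intro G hG G' hG' hGG'
      simp only [coe_filter, mem_univ, true_and, Set.mem_ofPred_eq] at hG hG'
      rw [← sdiff_sup_cancel hG, ← sdiff_sup_cancel hG', edgeFinset_inj.1 hGG']
  calc #{G : SimpleGraph V | H ≤ G} * 2 ^ #H.edgeFinset
      ≤ 2 ^ #Hᶜ.edgeFinset * 2 ^ #H.edgeFinset := by
        gcongr; exact hinj.trans_eq (card_powerset _)
    _ = 2 ^ (Fintype.card V).choose 2 := by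
        rw [← pow_add, add_comm, card_edgeFinset_add_card_edgeFinset_compl]

lemma card_isClique_mul_two_pow_le (s : Finset V) :
    #{G : SimpleGraph V | G.IsClique (s : Set V)} * 2 ^ (#s).choose 2 ≤
      2 ^ (Fintype.card V).choose 2 := by
  set K := (⊤ : SimpleGraph (s : Set V)).map (Function.Embedding.subtype _)
  have hK : #K.edgeFinset = (#s).choose 2 := by
    rw [card_edgeFinset_map, card_edgeFinset_top_eq_card_choose_two]
    simp
  simp only [isClique_iff_map_top_le, ← hK]
  convert card_supergraphs_mul_two_pow_le K

lemma card_isIndepSet_eq_card_isClique (s : Finset V) :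
    #{G : SimpleGraph V | G.IsIndepSet (s : Set V)} =
      #{G : SimpleGraph V | G.IsClique (s : Set V)} :=
  card_bij' (fun G _ => Gᶜ) (fun G _ => Gᶜ) (by simp) (by simp) (by simp) (by simp)

lemma card_isClique_or_isIndepSet_mul_two_pow_le (s : Finset V) :
    #{G : SimpleGraph V | G.IsClique (s : Set V) ∨ G.IsIndepSet s} * 2 ^ (#s).choose 2 ≤
      2 * 2 ^ (Fintype.card V).choose 2 := by
  calc _ ≤ (#{G : SimpleGraph V | G.IsClique (s : Set V)} +
        #{G : SimpleGraph V | G.IsIndepSet (s : Set V)}) * 2 ^ (#s).choose 2 := by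
        rw [filter_or]; gcongr; exact card_union_le _ _
    _ = 2 * (#{G : SimpleGraph V | G.IsClique (s : Set V)} * 2 ^ (#s).choose 2) := by
        rw [card_isIndepSet_eq_card_isClique]; ring
    _ ≤ 2 * 2 ^ (Fintype.card V).choose 2 := by
        gcongr; exact card_isClique_mul_two_pow_le s

lemma card_exists_isClique_or_isIndepSet_mul_two_pow_le (t : ℕ) :
    #{G : SimpleGraph V | ∃ s : Finset V, #s = t ∧ (G.IsClique (s : Set V) ∨ G.IsIndepSet s)} *
        2 ^ t.choose 2 ≤ (Fintype.card V).choose t * (2 * 2 ^ (Fintype.card V).choose 2) := by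
  have hunion : ({G : SimpleGraph V | ∃ s : Finset V, #s = t ∧
      (G.IsClique (s : Set V) ∨ G.IsIndepSet s)} : Finset (SimpleGraph V)) =
        (univ.powersetCard t).biUnion fun s : Finset V =>
          {G : SimpleGraph V | G.IsClique (s : Set V) ∨ G.IsIndepSet s} := by
    ext G; simp
  rw [hunion]
  refine (Nat.mul_le_mul_right _ card_biUnion_le).trans ?_
  rw [sum_mul]
  calc _ ≤ ∑ _s ∈ univ.powersetCard t, 2 * 2 ^ (Fintype.card V).choose 2 := by
        refine sum_le_sum fun s hs => ?_
        rw [← (mem_powersetCard_univ.1 hs)]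
        exact card_isClique_or_isIndepSet_mul_two_pow_le s
    _ = _ := by rw [sum_const, card_powersetCard, card_univ, smul_eq_mul]

end

end SimpleGraph

open Real

lemma three_halves_le_logb_two {x : ℝ} (hx : 3 ≤ x) : 3 / 2 ≤ logb 2 x := by
  have h : (3 : ℝ) ≤ 2 * logb 2 x :=
    calc (3 : ℝ) = logb 2 (2 ^ 3) := by rw [logb_pow, logb_self_eq_one one_lt_two]; norm_num
      _ ≤ logb 2 (x ^ 2) := logb_le_logb_of_le one_lt_two (by norm_num) (by nlinarith)
      _ = 2 * logb 2 x := by rw [logb_pow]; norm_num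
  linarith

lemma one_add_sq_div_two_add_mul_le_choose_two {L r : ℝ} {t : ℕ} (hL : 3 / 2 ≤ L) (hr : 0 ≤ r)
    (ht : 3 * L + r ≤ t) : 1 + r ^ 2 / 2 + t * L ≤ t.choose 2 := by
  rw [Nat.cast_choose_two]
  -- With `a = 3L + r`: `t(t-1-2L) - a(a-1-2L) = (t-a)(t+a-1-2L) ≥ 0` and
  -- `a(a-1-2L) = 3L(L-1) + r(4L-1) + r² ≥ 2 + r²`.
  nlinarith [mul_nonneg (sub_nonneg.2 ht) (by linarith : (0 : ℝ) ≤ t + 3 * L + r - 1 - 2 * L),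
    mul_nonneg hr (by linarith : (0 : ℝ) ≤ 4 * L - 1),
    mul_nonneg (by linarith : (0 : ℝ) ≤ L - 3 / 2) (by linarith : (0 : ℝ) ≤ L + 1 / 2)]

lemma choose_le_two_rpow_mul_logb {n : ℕ} (hn : 0 < n) (t : ℕ) :
    (n.choose t : ℝ) ≤ 2 ^ (t * logb 2 n) := by
  rw [mul_comm, rpow_mul zero_le_two, rpow_logb two_pos one_lt_two.ne' (by exact_mod_cast hn),
    rpow_natCast]
  exact_mod_cast Nat.choose_le_pow n t

/-- For `n ≥ 3` and `s ∈ ℕ`, a uniformly random graph on `n` labeled vertices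
(the Erdős–Rényi graph `G(n,1/2)`) contains a clique or an independent set of
size `t = ⌈3 log₂ n + √(2s)⌉` with probability at most `2^{-s}`. -/
theorem erdos_renyi_clique_indep (n : ℕ) (hn : 3 ≤ n) (s : ℕ) (t : ℕ)
    (ht : t = (⌈3 * Real.logb 2 n + Real.sqrt (2 * s)⌉).toNat) :
    (Nat.card {G : SimpleGraph (Fin n) | ∃ S : Finset (Fin n), S.card = t ∧
        (G.IsClique ↑S ∨ (↑S : Set (Fin n)).Pairwise fun u v => ¬ G.Adj u v)} : ℝ) /
      2 ^ (n.choose 2) ≤ (2 : ℝ) ^ (-(s : ℝ)) := by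
  classical
  have hL : 3 / 2 ≤ logb 2 n := three_halves_le_logb_two (by exact_mod_cast hn)
  have htL : 3 * logb 2 n + √(2 * s) ≤ t := by rw [ht, Int.ceil_toNat]; exact Nat.le_ceil _
  have hexp : 1 + s + t * logb 2 n ≤ t.choose 2 := by
    have h := one_add_sq_div_two_add_mul_le_choose_two hL (sqrt_nonneg _) htL
    rw [sq_sqrt (by positivity)] at h
    linarith
  have hcount := SimpleGraph.card_exists_isClique_or_isIndepSet_mul_two_pow_le (V := Fin n) t
  rw [Fintype.card_fin] at hcount
  rw [Nat.card_eq_fintype_card, Fintype.card_subtype, div_le_iff₀ (by positivity)]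
  refine le_of_mul_le_mul_right ?_ (by positivity : (0 : ℝ) < 2 ^ t.choose 2)
  calc _ ≤ (n.choose t : ℝ) * (2 * 2 ^ n.choose 2) := by exact_mod_cast hcount
    _ ≤ 2 ^ (t * logb 2 n) * 2 ^ (1 : ℝ) * 2 ^ n.choose 2 := by
        rw [rpow_one, ← mul_assoc]
        gcongr
        exact choose_le_two_rpow_mul_logb (by omega) t
    _ ≤ 2 ^ (-(s : ℝ) + t.choose 2) * 2 ^ n.choose 2 := by
        rw [← rpow_add two_pos]
        exact mul_le_mul_of_nonneg_right (rpow_le_rpow_of_exponent_le one_le_two (by linarith))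
          (by positivity)
    _ = 2 ^ (-(s : ℝ)) * 2 ^ n.choose 2 * 2 ^ t.choose 2 := by
        rw [rpow_add two_pos, rpow_natCast]; ring
end

section
/- Suppose n balls are thrown independently and uniformly at random into n urns, and let t ∈ ℕ satisfy t·log₂(t/e) ≥ log₂ n + s. Then the probability that some urn contains more than t balls is at most 2^{−s}. -/
open Finset in
lemma count_bound (n t : ℕ) :
    (Finset.univ.filter fun b : Fin n → Fin n => ∃ j : Fin n,
        t < (Finset.univ.filter fun i => b i = j).card).card
      ≤ n * n.choose (t+1) * n ^ (n - (t+1)) := by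
  classical
  have hsub : (Finset.univ.filter fun b : Fin n → Fin n => ∃ j : Fin n,
        t < (Finset.univ.filter fun i => b i = j).card) ⊆
      Finset.univ.biUnion (fun j : Fin n =>
        (Finset.univ.powersetCard (t+1)).biUnion (fun S =>
          Finset.univ.filter fun b : Fin n → Fin n => ∀ i ∈ S, b i = j)) := by
    intro b hb
    simp only [mem_filter, mem_univ, true_and] at hb
    obtain ⟨j, hj⟩ := hb
    obtain ⟨S, hS, hScard⟩ := Finset.exists_subset_card_eq hj
    simp only [mem_biUnion, mem_univ, true_and, mem_powersetCard, mem_filter]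
    exact ⟨j, ⟨S, ⟨S.subset_univ, hScard⟩, fun i hi => (mem_filter.1 (hS hi)).2⟩⟩
  refine (Finset.card_le_card hsub).trans ?_
  refine (Finset.card_biUnion_le_card_mul _ _ (n.choose (t+1) * n ^ (n - (t+1)))
    fun j _ => ?_).trans (by simp [Finset.card_univ, mul_assoc])
  refine (Finset.card_biUnion_le_card_mul _ _ (n ^ (n - (t+1))) fun S hS => ?_).trans
    (by simp [Finset.card_powersetCard, Finset.card_univ])
  have hScard : S.card = t + 1 := (Finset.mem_powersetCard.1 hS).2
  have heq : (Finset.univ.filter fun b : Fin n → Fin n => ∀ i ∈ S, b i = j)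
      = Fintype.piFinset (fun i => if i ∈ S then {j} else Finset.univ) := by
    ext b
    simp only [mem_filter, mem_univ, true_and, Fintype.mem_piFinset]
    constructor
    · intro h i
      by_cases hi : i ∈ S <;> simp [hi, h]
    · intro h i hi
      have := h i
      simpa [hi] using this
  rw [heq, Fintype.card_piFinset]
  have hcards : ∀ i : Fin n, (if i ∈ S then ({j} : Finset (Fin n)) else Finset.univ).card
      = if i ∈ S then 1 else n := by
    intro i; by_cases hi : i ∈ S <;> simp [hi]
  rw [Finset.prod_congr rfl (fun i _ => hcards i), ← Finset.prod_mul_prod_compl S]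
  rw [Finset.prod_eq_one (fun i hi => by simp [hi]),
    Finset.prod_congr rfl (fun i hi => by simp [Finset.mem_compl.1 hi] : ∀ i ∈ Sᶜ, _ = n),
    Finset.prod_const, one_mul, Finset.card_compl, hScard, Fintype.card_fin]


lemma real_bound (n s t : ℕ) (hn : 1 ≤ n) (htn : t + 1 ≤ n)
    (hts : (t : ℝ) * Real.logb 2 (t / Real.exp 1) ≥ Real.logb 2 n + s) :
    ((n * n.choose (t+1) * n ^ (n - (t+1)) : ℕ) : ℝ) / (n : ℝ) ^ n
      ≤ (2 : ℝ) ^ (-(s : ℝ)) := by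
  have hn0 : (0:ℝ) < n := by exact_mod_cast hn
  have hfact : (0:ℝ) < (Nat.factorial (t+1) : ℝ) := by
    exact_mod_cast Nat.factorial_pos _
  have hfactt : (0:ℝ) < (Nat.factorial t : ℝ) := by exact_mod_cast Nat.factorial_pos _
  set x : ℝ := ((t:ℝ) / Real.exp 1) ^ t with hxdef
  have hx : 0 < x := by
    rcases Nat.eq_zero_or_pos t with h | h
    · simp [hxdef, h]
    · exact pow_pos (div_pos (by exact_mod_cast h) (Real.exp_pos 1)) _
  -- claim A : x ≤ t!
  have hA : x ≤ (Nat.factorial t : ℝ) := by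
    have h1 : (t:ℝ) ^ t / (Nat.factorial t : ℝ) ≤ Real.exp t :=
      Real.pow_div_factorial_le_exp (x := (t:ℝ)) (Nat.cast_nonneg t) t
    have h2 : (Real.exp 1) ^ t = Real.exp t := by
      rw [← Real.exp_nat_mul]; ring_nf
    rw [hxdef, div_pow, h2, div_le_iff₀ (Real.exp_pos _)]
    rw [div_le_iff₀ hfactt] at h1
    nlinarith [Real.exp_pos (t:ℝ), hfactt]
  -- claim B : n * 2^s ≤ x
  have hB : (n:ℝ) * 2 ^ s ≤ x := by
    have hy : (0:ℝ) < (n:ℝ) * 2 ^ s := by positivity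
    have hlogx : Real.logb 2 x = (t:ℝ) * Real.logb 2 ((t:ℝ) / Real.exp 1) := by
      rw [hxdef, Real.logb_pow]
    have hlogy : Real.logb 2 ((n:ℝ) * 2 ^ s) = Real.logb 2 n + s := by
      rw [Real.logb_mul (by positivity) (by positivity), Real.logb_pow,
        Real.logb_self_eq_one (by norm_num)]
      ring
    have hle : Real.logb 2 ((n:ℝ) * 2 ^ s) ≤ Real.logb 2 x := by
      rw [hlogx, hlogy]; exact hts
    calc (n:ℝ) * 2 ^ s = 2 ^ Real.logb 2 ((n:ℝ) * 2 ^ s) :=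
          (Real.rpow_logb (by norm_num) (by norm_num) hy).symm
      _ ≤ 2 ^ Real.logb 2 x := by
          exact Real.rpow_le_rpow_of_exponent_le (by norm_num) hle
      _ = x := Real.rpow_logb (by norm_num) (by norm_num) hx
  have hC : (n.choose (t+1) : ℝ) * (Nat.factorial (t+1) : ℝ) ≤ (n:ℝ) ^ (t+1) := by
    have := Nat.descFactorial_le_pow n (t+1)
    rw [Nat.descFactorial_eq_factorial_mul_choose] at this
    exact_mod_cast by rw [mul_comm]; exact_mod_cast this
  have hpowsplit : (n:ℝ) ^ (n:ℕ) = (n:ℝ) ^ (t+1) * (n:ℝ) ^ (n - (t+1)) := by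
    rw [← pow_add, Nat.add_sub_cancel' htn]
  calc ((n * n.choose (t+1) * n ^ (n - (t+1)) : ℕ) : ℝ) / (n : ℝ) ^ n
      = (n:ℝ) * (n.choose (t+1) : ℝ) / (n:ℝ) ^ (t+1) := by
        push_cast
        rw [hpowsplit]
        have hp1 : (0:ℝ) < (n:ℝ) ^ (t+1) := pow_pos hn0 _
        have hp2 : (0:ℝ) < (n:ℝ) ^ (n - (t+1)) := pow_pos hn0 _
        field_simp
    _ ≤ (n:ℝ) / (Nat.factorial (t+1) : ℝ) := by
        rw [div_le_div_iff₀ (pow_pos hn0 _) hfact]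
        nlinarith [mul_le_mul_of_nonneg_left hC hn0.le]
    _ ≤ (n:ℝ) / (Nat.factorial t : ℝ) :=
        div_le_div_of_nonneg_left hn0.le hfactt
          (by exact_mod_cast Nat.factorial_le (Nat.le_succ t))
    _ ≤ (n:ℝ) / x := div_le_div_of_nonneg_left hn0.le hx hA
    _ ≤ (n:ℝ) / ((n:ℝ) * 2 ^ s) :=
        div_le_div_of_nonneg_left hn0.le (by positivity) hB
    _ = (2 : ℝ) ^ (-(s : ℝ)) := by
        rw [Real.rpow_neg (by norm_num), Real.rpow_natCast]
        field_simp

/-- Balls in urns: if `n` balls are thrown independently and uniformly at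
random into `n` urns and `t log₂ (t/e) ≥ log₂ n + s`, then the probability
that some urn receives more than `t` balls is at most `2^{-s}`. -/
theorem balls_in_urns (n : ℕ) (s : ℕ) (t : ℕ)
    (hts : (t : ℝ) * Real.logb 2 (t / Real.exp 1) ≥ Real.logb 2 n + s) :
    (Nat.card {b : Fin n → Fin n | ∃ j : Fin n,
        t < (Finset.univ.filter fun i => b i = j).card} : ℝ) /
      (n : ℝ) ^ n ≤ (2 : ℝ) ^ (-(s : ℝ)) := by
  classical
  have hrpos : (0:ℝ) < (2 : ℝ) ^ (-(s : ℝ)) := Real.rpow_pos_of_pos (by norm_num) _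
  have hcard : Nat.card {b : Fin n → Fin n | ∃ j : Fin n,
      t < (Finset.univ.filter fun i => b i = j).card}
      = (Finset.univ.filter fun b : Fin n → Fin n => ∃ j : Fin n,
          t < (Finset.univ.filter fun i => b i = j).card).card := by
    rw [Nat.card_eq_fintype_card]
    exact Fintype.card_subtype _
  rw [hcard]
  have hbound := count_bound n t
  rcases Nat.lt_or_ge n 1 with hn | hn
  · interval_cases n
    simp [hrpos.le]
  rcases Nat.lt_or_ge n (t+1) with htn | htn
  · have : n.choose (t+1) = 0 := Nat.choose_eq_zero_of_lt htn
    rw [this] at hbound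
    simp only [Nat.mul_zero, Nat.zero_mul, Nat.le_zero] at hbound
    rw [hbound]
    simpa using hrpos.le
  · refine le_trans ?_ (real_bound n s t hn htn hts)
    have hp : (0:ℝ) < (n:ℝ) ^ n := pow_pos (by exact_mod_cast hn) _
    gcongr
end

section
/- (Non-Uniform Encoding Lemma) Let p be a probability distribution on a countable set X with p_x > 0 for all x, and let ℓ : X → [0,∞] satisfy Kraft's condition Σ_{x∈X} 2^{−ℓ(x)} ≤ 1. If x is drawn with probability p_x, then for any s ≥ 0, Pr{ ℓ(x) ≤ log₂(1/p_x) − s } ≤ 2^{−s}. -/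
open scoped Classical

/-- `2^{-a}` for an extended nonnegative real `a`, with `2^{-∞} = 0`. -/
noncomputable def twoPowNeg (a : ENNReal) : ENNReal :=
  if a = ⊤ then 0 else ENNReal.ofReal ((2 : ℝ) ^ (-(a.toReal)))

/-- Non-Uniform Encoding Lemma: if `p` is a positive probability distribution
on a countable `X` and `ℓ : X → [0,∞]` satisfies Kraft's condition, then a
point `x` drawn with probability `p x` satisfies
`ℓ(x) ≤ log₂(1/p_x) - s` with probability at most `2^{-s}`. -/
theorem nonuniform_encoding_lemma {X : Type*} [Countable X]
    (p : X → ℝ) (hp : ∀ x, 0 < p x) (hsum : ∑' x, p x = 1)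
    (ℓ : X → ENNReal) (hkraft : ∑' x, twoPowNeg (ℓ x) ≤ 1)
    (s : ℝ) (hs : 0 ≤ s) :
    (∑' x, if ℓ x ≠ ⊤ ∧ (ℓ x).toReal ≤ Real.logb 2 (1 / p x) - s
        then p x else 0) ≤ (2 : ℝ) ^ (-s) := by
  set g : X → ℝ := fun x => (twoPowNeg (ℓ x)).toReal with hgdef
  have hne : ∀ x, twoPowNeg (ℓ x) ≠ ⊤ := by
    intro x
    unfold twoPowNeg
    split <;> simp
  have htop : ∑' x, twoPowNeg (ℓ x) ≠ ⊤ :=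
    ne_top_of_le_ne_top (by simp) hkraft
  have hg : Summable g := ENNReal.summable_toReal htop
  have hgt : ∑' x, g x ≤ 1 := by
    have h1 := ENNReal.tsum_toReal_eq hne
    rw [hgdef, ← h1]
    have := ENNReal.toReal_mono (by simp) hkraft
    simpa using this
  have key : ∀ x, (if ℓ x ≠ ⊤ ∧ (ℓ x).toReal ≤ Real.logb 2 (1 / p x) - s
      then p x else 0) ≤ (2 : ℝ) ^ (-s) * g x := by
    intro x
    split
    · rename_i h
      obtain ⟨h1, h2⟩ := h
      have hgx : g x = (2 : ℝ) ^ (-(ℓ x).toReal) := by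
        simp only [hgdef, twoPowNeg, if_neg h1]
        rw [ENNReal.toReal_ofReal (le_of_lt (Real.rpow_pos_of_pos two_pos _))]
      rw [hgx, ← Real.rpow_add two_pos]
      have hlog : Real.logb 2 (1 / p x) = -Real.logb 2 (p x) := by
        rw [one_div, Real.logb_inv]
      have hle : Real.logb 2 (p x) ≤ -s + -(ℓ x).toReal := by
        rw [hlog] at h2; linarith
      calc p x = (2 : ℝ) ^ Real.logb 2 (p x) :=
            (Real.rpow_logb two_pos (by norm_num) (hp x)).symm
        _ ≤ (2 : ℝ) ^ (-s + -(ℓ x).toReal) :=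
            (Real.rpow_le_rpow_left_iff one_lt_two).mpr hle
    · positivity
  have hrs : Summable (fun x => (2 : ℝ) ^ (-s) * g x) := hg.mul_left _
  have hf : Summable (fun x => if ℓ x ≠ ⊤ ∧ (ℓ x).toReal ≤ Real.logb 2 (1 / p x) - s
      then p x else 0) := by
    apply Summable.of_nonneg_of_le _ key hrs
    intro x
    split
    · exact le_of_lt (hp x)
    · exact le_refl 0
  calc (∑' x, if ℓ x ≠ ⊤ ∧ (ℓ x).toReal ≤ Real.logb 2 (1 / p x) - s
        then p x else 0)
      ≤ ∑' x, (2 : ℝ) ^ (-s) * g x := Summable.tsum_le_tsum key hf hrs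
    _ = (2 : ℝ) ^ (-s) * ∑' x, g x := tsum_mul_left
    _ ≤ (2 : ℝ) ^ (-s) * 1 := by
        apply mul_le_mul_of_nonneg_left hgt
        positivity
    _ = (2 : ℝ) ^ (-s) := mul_one _
end
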